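/- Let g be a finite-dimensional semisimple Lie algebra over an algebraically closed field of characteristic zero, and let a be an algebraic Lie subalgebra of g containing a Cartan subalgebra of g. Then for every regular semisimple element x of g belonging to a, the centralizer g^x is contained in a. -/

import Mathlib

open LieAlgebra Module

section LieSetup

variable (K L : Type*) [Field K] [IsAlgClosed K] [CharZero K]
  [LieRing L] [LieAlgebra K L] [FiniteDimensional K L]

/-- Exponential of a nilpotent endomorphism (and `1` otherwise). -/
noncomputable def nilpExp (f : Module.End K L) : Module.End K L :=
  @dite _ (IsNilpotent f) (Classical.dec _)
    (fun h => ∑ n ∈ Finset.range h.choose, ((n.factorial : K)⁻¹) • f ^ n) (fun _ => 1)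

/-- The adjoint group of the Lie algebra `L`: the group of inner automorphisms, i.e. the
subgroup of `GL(L)` generated by the exponentials `exp (ad x)` with `ad x` nilpotent. -/
noncomputable def adjointGroup : Subgroup (L ≃ₗ[K] L) :=
  Subgroup.closure {e | ∃ x : L, IsNilpotent (ad K L x) ∧ ∀ y, e y = nilpExp K L (ad K L x) y}

/-- A Borel subalgebra: a maximal solvable subalgebra. -/
def IsBorelSubalgebra (b : LieSubalgebra K L) : Prop :=
  LieAlgebra.IsSolvable ↥b ∧
    ∀ c : LieSubalgebra K L, LieAlgebra.IsSolvable ↥c → b ≤ c → b = c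

/-- A parabolic subalgebra: one containing a Borel subalgebra. -/
def IsParabolic (p : LieSubalgebra K L) : Prop :=
  ∃ b : LieSubalgebra K L, IsBorelSubalgebra K L b ∧ b ≤ p

/-- The nilpotent radical of a parabolic subalgebra, realized as the orthogonal complement
of `p` with respect to the Killing form. -/
noncomputable def nilpotentRadical (p : LieSubalgebra K L) : Submodule K L :=
  LinearMap.BilinForm.orthogonal (killingForm K L) p.toSubmodule

end LieSetup

/-!
Conjugating by the automorphism `e` given by algebraicity of `a`, we may assume `x ∈ c`; elements
of the adjoint group are Lie automorphisms, so `e x` is still regular and `e` maps the centralizer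
of `x` to that of `e x`. The Engel subalgebra of a regular element is a Cartan subalgebra, and it
contains the nilpotent subalgebra `c ∋ e x`. A Cartan subalgebra is its own zero root space, so it
is maximal among nilpotent subalgebras; hence `engel (e x) = c`. The centralizer of `e x` lies in
its Engel subalgebra, hence in `c ⊆ a`, and `e⁻¹` preserves `a`.
-/

section AdjointGroup

variable {K L : Type*} [Field K] [CharZero K] [LieRing L] [LieAlgebra K L]

lemma nilpExp_ad_lie (x : L) (hx : IsNilpotent (ad K L x)) (y z : L) :
    nilpExp K L (ad K L x) ⁅y, z⁆ = ⁅nilpExp K L (ad K L x) y, nilpExp K L (ad K L x) z⁆ := by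
  -- `nilpExp` is Mathlib's `LieDerivation.exp` for the `ℚ`-structure restricted from `K`.
  let _ : Module ℚ L := Module.compHom L (algebraMap ℚ K)
  let _ : LieAlgebra ℚ L := { lie_smul := fun t y z => lie_smul (algebraMap ℚ K t) y z }
  have hD : (LieDerivation.ad K L x : Module.End K L) = ad K L x :=
    LieDerivation.coe_ad_apply_eq_ad_apply x
  have key : ∀ w, nilpExp K L (ad K L x) w = LieDerivation.exp _ (hD ▸ hx) w := by
    intro w
    rw [LieDerivation.exp_map_apply, hD, IsNilpotent.exp_eq_sum hx.choose_spec, nilpExp,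
      dif_pos hx]
    simp only [LinearMap.sum_apply, LinearMap.smul_apply]
    refine Finset.sum_congr rfl fun n _ => ?_
    change _ = algebraMap ℚ K _ • (_ : L)
    rw [map_inv₀, map_natCast]
  simp only [key]
  exact LieEquiv.map_lie _ y z

lemma adjointGroup_map_lie {e : L ≃ₗ[K] L} (he : e ∈ adjointGroup K L) (y z : L) :
    e ⁅y, z⁆ = ⁅e y, e z⁆ := by
  induction he using Subgroup.closure_induction generalizing y z with
  | mem g hg =>
    obtain ⟨x, hx, hgx⟩ := hg
    rw [hgx, hgx, hgx, nilpExp_ad_lie x hx]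
  | one => rfl
  | mul g g' _ _ hg hg' =>
    change g (g' ⁅y, z⁆) = ⁅g (g' y), g (g' z)⁆
    rw [hg', hg]
  | inv g _ hg =>
    apply g.injective
    change g (g.symm ⁅y, z⁆) = g ⁅g.symm y, g.symm z⁆
    rw [hg, g.apply_symm_apply, g.apply_symm_apply, g.apply_symm_apply]

end AdjointGroup

namespace LieEquiv

variable {R L : Type*} [CommRing R] [LieRing L] [LieAlgebra R L]

lemma ad_apply_eq_conj (φ : L ≃ₗ⁅R⁆ L) (x : L) :
    ad R L (φ x) = φ.toLinearEquiv.conj (ad R L x) := by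
  ext y
  conv_lhs => rw [ad_apply, ← φ.apply_symm_apply y, ← φ.map_lie]
  rfl

lemma isRegular_apply_iff [Module.Finite R L] [Module.Free R L] (φ : L ≃ₗ⁅R⁆ L) (x : L) :
    IsRegular R (φ x) ↔ IsRegular R x := by
  rw [isRegular_def, isRegular_def, ad_apply_eq_conj, LinearEquiv.charpoly_conj]

end LieEquiv

namespace LieSubalgebra

lemma le_engel_of_mem {R L : Type*} [CommRing R] [LieRing L] [LieAlgebra R L]
    {H : LieSubalgebra R L} [LieRing.IsNilpotent H] {z : L} (hz : z ∈ H) : H ≤ engel R z := by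
  intro w hw
  obtain ⟨n, hn⟩ : IsNilpotent (ad R H ⟨z, hz⟩) :=
    LieModule.isNilpotent_toEnd_of_isNilpotent R H H ⟨z, hz⟩
  refine (mem_engel_iff R z w).2 ⟨n, ?_⟩
  rw [← coe_ad_pow R L H ⟨z, hz⟩ ⟨w, hw⟩ n, hn]
  rfl

lemma IsCartanSubalgebra.eq_of_le {R L : Type*} [CommRing R] [LieRing L] [LieAlgebra R L]
    [IsNoetherian R L] {H N : LieSubalgebra R L} [H.IsCartanSubalgebra] [LieRing.IsNilpotent N]
    (hHN : H ≤ N) : H = N := by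
  refine le_antisymm hHN fun w hw => ?_
  rw [← zeroRootSubalgebra_eq_of_is_cartan R L H, mem_zeroRootSubalgebra]
  intro y
  exact (mem_engel_iff R _ w).1 (le_engel_of_mem (hHN y.2) hw)

end LieSubalgebra

namespace LieAlgebra

open LieSubalgebra Cardinal

variable {K L : Type*} [Field K] [LieRing L] [LieAlgebra K L] [FiniteDimensional K L]

lemma isCartanSubalgebra_engel_of_isRegular [Infinite K] {x : L} (hx : IsRegular K x) :
    (engel K x).IsCartanSubalgebra := by
  have hLK : finrank K L ≤ #K := natCast_le_aleph0.trans (infinite_iff.mp ‹_›)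
  refine ⟨?_, normalizer_engel _ _⟩
  apply isNilpotent_of_forall_le_engel
  intro y hy
  set Ex : {engel K z | z ∈ engel K x} := ⟨engel K x, x, self_mem_engel _ _, rfl⟩
  suffices IsBot Ex from @this ⟨engel K y, y, hy, rfl⟩
  apply engel_isBot_of_isMin hLK (engel K x) Ex le_rfl
  rintro ⟨_, y, hy, rfl⟩ hyx
  suffices finrank K (engel K x) ≤ finrank K (engel K y) by
    suffices engel K y = engel K x from this.ge
    apply LieSubalgebra.toSubmodule_injective
    exact Submodule.eq_of_le_of_finrank_le hyx this
  rw [(isRegular_iff_finrank_engel_eq_rank K x).mp hx]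
  apply rank_le_finrank_engel

lemma engel_eq_of_isRegular_of_mem [Infinite K] {H : LieSubalgebra K L} [H.IsCartanSubalgebra]
    {x : L} (hx : IsRegular K x) (hxH : x ∈ H) : engel K x = H :=
  have := isCartanSubalgebra_engel_of_isRegular hx
  (IsCartanSubalgebra.eq_of_le (le_engel_of_mem hxH)).symm

end LieAlgebra

-- `halg` encodes the algebraicity of `a`.
theorem stmt1_general {K L : Type*} [Field K] [CharZero K]
    [LieRing L] [LieAlgebra K L] [FiniteDimensional K L]
    (a : LieSubalgebra K L) (c : LieSubalgebra K L) [c.IsCartanSubalgebra] (hca : c ≤ a)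
    (halg : ∀ x ∈ a, (ad K L x).IsSemisimple →
      ∃ e ∈ adjointGroup K L, (e '' (a : Set L) = (a : Set L)) ∧ e x ∈ c)
    (x : L) (hxa : x ∈ a) (hreg : LieAlgebra.IsRegular K x) (hss : (ad K L x).IsSemisimple) :
    ∀ y : L, ⁅x, y⁆ = 0 → y ∈ a := by
  intro y hxy
  obtain ⟨e, he, hea, hexc⟩ := halg x hxa hss
  let φ : L ≃ₗ⁅K⁆ L := { e with map_lie' := adjointGroup_map_lie he _ _ }
  have hreg' : IsRegular K (φ x) := (φ.isRegular_apply_iff x).2 hreg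
  have hey : φ y ∈ LieSubalgebra.engel K (φ x) :=
    (LieSubalgebra.mem_engel_iff K _ _).2 ⟨1, by simp [← φ.map_lie, hxy]⟩
  rw [engel_eq_of_isRegular_of_mem hreg' hexc] at hey
  have hya : e y ∈ e '' (a : Set L) := by rw [hea]; exact hca hey
  exact e.injective.mem_set_image.1 hya

/-- Let `g` be a finite-dimensional semisimple Lie algebra over an algebraically
closed field of characteristic zero and let `a` be an algebraic Lie subalgebra of `g` containing
a Cartan subalgebra `c` of `g`.  (Algebraicity is recorded through its standard consequence used
in the proof: every semisimple element of `a` is conjugate, under an inner automorphism of `g`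
preserving `a` — coming from the adjoint group of `a` — to an element of `c`.)  Then for every
regular semisimple element `x` of `g` belonging to `a`, the centralizer `g^x` is contained
in `a`. -/
theorem stmt1 {K L : Type*} [Field K] [IsAlgClosed K] [CharZero K]
    [LieRing L] [LieAlgebra K L] [FiniteDimensional K L] [LieAlgebra.IsSemisimple K L]
    (a : LieSubalgebra K L) (c : LieSubalgebra K L) [c.IsCartanSubalgebra] (hca : c ≤ a)
    (halg : ∀ x ∈ a, (ad K L x).IsSemisimple →
      ∃ e ∈ adjointGroup K L, (e '' (a : Set L) = (a : Set L)) ∧ e x ∈ c)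
    (x : L) (hxa : x ∈ a) (hreg : LieAlgebra.IsRegular K x) (hss : (ad K L x).IsSemisimple) :
    ∀ y : L, ⁅x, y⁆ = 0 → y ∈ a :=
  stmt1_general a c hca halg x hxa hreg hss
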